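/- arXiv:1404.2853 — 12 statements merged into one kernel-verified Lean document; each statement's English description precedes it below -/
import Mathlib

section
/- Let R = ℂ[[s,t]] be the formal power series ring in two variables over ℂ. Let f₁, f₂, g, h' ∈ R and set h = f₁h'. Assume that the quotient R/(f₁f₂, g, h) is a finite-dimensional ℂ-vector space. Then the sequence 0 → R/(f₂, g, h') → R/(f₁f₂, g, h) → R/(f₁, g) → 0 is exact, where the first map is induced by multiplication by f₁ and the second is the natural projection. -/
/-!
Write `J = (f₁f₂, g, f₁h')`. Only injectivity needs an argument. Since `R/J` is finite-dimensional,
`J` contains powers `s^k` and `t^l`. If `f₁x = a f₁f₂ + b g + c f₁h'`, then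
`w = x - a f₂ - c h'` satisfies `f₁w = bg`, and multiplying an expression of `s^k` (resp. `t^l`)
in terms of the generators of `J` by `w` shows that `g` divides `s^k w` and `t^l w`. As `t` is a
nonzerodivisor modulo `s`, this forces `g ∣ w`, so `x ∈ (f₂, g, h')`.
-/

open MvPowerSeries

section Divisibility

variable {A : Type*} [CommMonoidWithZero A] [IsCancelMulZero A]

theorem dvd_of_dvd_mul_of_dvd_mul {p q g y : A} (hp : p ≠ 0) (hpq : ∀ u, p ∣ q * u → p ∣ u)
    (hpy : g ∣ p * y) (hqy : g ∣ q * y) : g ∣ y := by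
  rcases eq_or_ne g 0 with rfl | hg
  · rw [zero_dvd_iff, mul_eq_zero] at hpy
    simp [hpy.resolve_left hp]
  obtain ⟨u, hu⟩ := hpy
  obtain ⟨v, hv⟩ := hqy
  have hquv : q * u = p * v := mul_left_cancel₀ hg <| by
    calc g * (q * u) = q * (p * y) := by rw [hu]; ac_rfl
      _ = p * (g * v) := by rw [← hv]; ac_rfl
      _ = g * (p * v) := by ac_rfl
  obtain ⟨u', rfl⟩ := hpq u ⟨v, hquv⟩
  exact ⟨u', mul_left_cancel₀ hp <| by rw [hu]; ac_rfl⟩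

theorem dvd_of_dvd_pow_mul_of_dvd_pow_mul {p q g y : A} (hp : p ≠ 0)
    (hpq : ∀ u, p ∣ q * u → p ∣ u) {k l : ℕ} (hk : g ∣ p ^ k * y) (hl : g ∣ q ^ l * y) :
    g ∣ y := by
  have hpql : ∀ l u, p ∣ q ^ l * u → p ∣ u := by
    intro l
    induction l with
    | zero => simp
    | succ l ih => exact fun u hu ↦ ih u (hpq _ (by rwa [← mul_assoc, ← pow_succ']))
  induction k with
  | zero => simpa using hk
  | succ k ih =>
    refine ih (dvd_of_dvd_mul_of_dvd_mul hp (hpql l) ?_ ?_)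
    · rwa [← mul_assoc, ← pow_succ']
    · rw [mul_left_comm]
      exact hl.mul_left _

end Divisibility

section Ideals

variable {A : Type*} [CommRing A]

open Ideal

theorem mul_mem_span_mul {f₁ f₂ g h' x : A} (hx : x ∈ span {f₂, g, h'}) :
    f₁ * x ∈ span {f₁ * f₂, g, f₁ * h'} := by
  obtain ⟨a, b, c, rfl⟩ := Submodule.mem_span_triple.mp hx
  have : f₁ * (a • f₂ + b • g + c • h') = a • (f₁ * f₂) + (f₁ * b) • g + c • (f₁ * h') := by
    simp only [smul_eq_mul]; ring
  rw [this]
  exact Submodule.mem_span_triple.mpr ⟨_, _, _, rfl⟩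

theorem dvd_mul_of_mem_span {f₁ f₂ g h' w b z : A} (hw : f₁ * w = b * g)
    (hz : z ∈ span {f₁ * f₂, g, f₁ * h'}) : g ∣ z * w := by
  obtain ⟨A₁, A₂, A₃, rfl⟩ := Submodule.mem_span_triple.mp hz
  refine ⟨(A₁ * f₂ + A₃ * h') * b + A₂ * w, ?_⟩
  simp only [smul_eq_mul]
  linear_combination (A₁ * f₂ + A₃ * h') * hw

theorem mem_span_of_mul_mem_span [NoZeroDivisors A] {p q f₁ f₂ g h' x : A} (hp : p ≠ 0)
    (hpq : ∀ u, p ∣ q * u → p ∣ u) {k l : ℕ} (hk : p ^ k ∈ span {f₁ * f₂, g, f₁ * h'})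
    (hl : q ^ l ∈ span {f₁ * f₂, g, f₁ * h'}) (hx : f₁ * x ∈ span {f₁ * f₂, g, f₁ * h'}) :
    x ∈ span {f₂, g, h'} := by
  obtain ⟨a, b, c, habc⟩ := Submodule.mem_span_triple.mp hx
  simp only [smul_eq_mul] at habc
  have hw : f₁ * (x - a * f₂ - c * h') = b * g := by linear_combination -habc
  obtain ⟨d, hd⟩ := dvd_of_dvd_pow_mul_of_dvd_pow_mul hp hpq
    (dvd_mul_of_mem_span hw hk) (dvd_mul_of_mem_span hw hl)
  refine Submodule.mem_span_triple.mpr ⟨a, d, c, ?_⟩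
  simp only [smul_eq_mul]
  linear_combination -hd

theorem mem_span_pair_iff_exists_sub_mul_mem {f₁ g x : A} {J : Ideal A} (hgJ : g ∈ J)
    (hJ : J ≤ span {f₁, g}) : x ∈ span {f₁, g} ↔ ∃ y, x - f₁ * y ∈ J := by
  refine ⟨fun hx ↦ ?_, fun ⟨y, hy⟩ ↦ ?_⟩
  · obtain ⟨u, v, rfl⟩ := mem_span_pair.mp hx
    exact ⟨u, by simpa [mul_comm] using J.mul_mem_left v hgJ⟩
  · rw [← sub_add_cancel x (f₁ * y)]
    exact add_mem (hJ hy) (mul_mem_right _ _ (subset_span (by simp)))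

end Ideals

namespace MvPowerSeries

variable {σ K : Type*}

theorem X_dvd_X_mul_iff [CommSemiring K] {i j : σ} (hij : i ≠ j) {φ : MvPowerSeries σ K} :
    X i ∣ X j * φ ↔ X i ∣ φ := by
  refine ⟨fun h ↦ X_dvd_iff.mpr fun m hm ↦ ?_, fun h ↦ h.mul_left _⟩
  have hshift : coeff (Finsupp.single j 1 + m) (X j * φ) = coeff m φ := by
    simpa [X_def] using coeff_add_monomial_mul (Finsupp.single j 1) m φ 1
  rw [← hshift]
  exact X_dvd_iff.mp h _ (by simp [hm, hij.symm])

theorem exists_X_pow_mem [Field K] (I : Ideal (MvPowerSeries σ K))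
    [FiniteDimensional K (MvPowerSeries σ K ⧸ I)] (i : σ) : ∃ n, X i ^ n ∈ I := by
  have := IsArtinianRing.of_finite K (MvPowerSeries σ K ⧸ I)
  obtain ⟨n, hn⟩ := IsLocalRing.exists_maximalIdeal_pow_le_of_isArtinianRing_quotient I
  refine ⟨n, hn (Ideal.pow_mem_pow ?_ n)⟩
  simp [IsLocalRing.mem_maximalIdeal, mem_nonunits_iff, isUnit_iff_constantCoeff]

end MvPowerSeries

/-- Exactness of `0 → R/(f₂,g,h') → R/(f₁f₂,g,h) → R/(f₁,g) → 0` for `R = ℂ[[s,t]]`,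
`h = f₁h'`, assuming `R/(f₁f₂,g,h)` is a finite-dimensional ℂ-vector space; the first
map is induced by multiplication by `f₁` and the second is the natural projection. -/
theorem stmt_2 (f₁ f₂ g h h' : MvPowerSeries (Fin 2) ℂ) (hh : h = f₁ * h')
    (hfin : FiniteDimensional ℂ
      (MvPowerSeries (Fin 2) ℂ ⧸ Ideal.span {f₁ * f₂, g, h})) :
    -- multiplication by `f₁` induces a well-defined map `R/(f₂,g,h') → R/(f₁f₂,g,h)` ...
    (∀ x y : MvPowerSeries (Fin 2) ℂ,
      Ideal.Quotient.mk (Ideal.span {f₂, g, h'}) x =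
        Ideal.Quotient.mk (Ideal.span {f₂, g, h'}) y →
      Ideal.Quotient.mk (Ideal.span {f₁ * f₂, g, h}) (f₁ * x) =
        Ideal.Quotient.mk (Ideal.span {f₁ * f₂, g, h}) (f₁ * y)) ∧
    -- ... which is injective
    (∀ x : MvPowerSeries (Fin 2) ℂ,
      Ideal.Quotient.mk (Ideal.span {f₁ * f₂, g, h}) (f₁ * x) = 0 →
      Ideal.Quotient.mk (Ideal.span {f₂, g, h'}) x = 0) ∧
    -- the natural projection `R/(f₁f₂,g,h) → R/(f₁,g)` is well defined (hence surjective)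
    Ideal.span {f₁ * f₂, g, h} ≤ Ideal.span {f₁, g} ∧
    (∀ z : MvPowerSeries (Fin 2) ℂ ⧸ Ideal.span {f₁, g},
      ∃ x : MvPowerSeries (Fin 2) ℂ, Ideal.Quotient.mk (Ideal.span {f₁, g}) x = z) ∧
    -- exactness in the middle
    (∀ x : MvPowerSeries (Fin 2) ℂ,
      Ideal.Quotient.mk (Ideal.span {f₁, g}) x = 0 ↔
      ∃ y : MvPowerSeries (Fin 2) ℂ,
        Ideal.Quotient.mk (Ideal.span {f₁ * f₂, g, h}) x =
          Ideal.Quotient.mk (Ideal.span {f₁ * f₂, g, h}) (f₁ * y)) := by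
  subst hh
  have hJ : Ideal.span {f₁ * f₂, g, f₁ * h'} ≤ Ideal.span {f₁, g} := by
    rw [Ideal.span_le]
    simp only [Set.insert_subset_iff, Set.singleton_subset_iff, SetLike.mem_coe,
      Ideal.mem_span_pair]
    exact ⟨⟨f₂, 0, by ring⟩, ⟨0, 1, by ring⟩, ⟨h', 0, by ring⟩⟩
  obtain ⟨k, hk⟩ := exists_X_pow_mem (Ideal.span {f₁ * f₂, g, f₁ * h'}) 0
  obtain ⟨l, hl⟩ := exists_X_pow_mem (Ideal.span {f₁ * f₂, g, f₁ * h'}) 1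
  simp only [Ideal.Quotient.eq, Ideal.Quotient.eq_zero_iff_mem]
  refine ⟨fun x y hxy ↦ ?_, fun x hx ↦ ?_, hJ, Ideal.Quotient.mk_surjective, fun x ↦ ?_⟩
  · simpa [mul_sub] using mul_mem_span_mul (f₁ := f₁) hxy
  · exact mem_span_of_mul_mem_span (nonZeroDivisors.ne_zero X_mem_nonzeroDivisors)
      (fun _ ↦ (X_dvd_X_mul_iff (by decide)).mp) hk hl hx
  · exact mem_span_pair_iff_exists_sub_mul_mem (Ideal.subset_span (by simp)) hJ
end

section
/- Fix an integer k ≥ 1 and let R = ℂ[[s,t]]. For the holomorphic germ Φ₋ₖ(s,t) = (s, t², t³ + sᵏt), let J be the ideal of R generated by the three 2×2 minors of its Jacobian matrix, namely by 2t, 3t² + sᵏ, and −2k sᵏ⁻¹t². Then J equals the ideal (t, sᵏ), and dim_ℂ R/J = k. -/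
/-!
Since 2 is a unit, the minor ideal contains `t`, hence also `(3t² + sᵏ) - 3t · t = sᵏ`, while the
third minor is a multiple of `t²`; so it is `(t, sᵏ)`. Modulo `(t, sᵏ)` a power series is
determined exactly by its coefficients at `1, s, …, sᵏ⁻¹`, which gives codimension `k`.
-/

open MvPowerSeries

theorem Ideal.span_two_mul_three_mul_sq_add_mul_sq {R : Type*} [CommRing R] (h2 : IsUnit (2 : R))
    (t a c : R) : Ideal.span {2 * t, 3 * t ^ 2 + a, c * t ^ 2} = Ideal.span {t, a} := by
  set J := Ideal.span {2 * t, 3 * t ^ 2 + a, c * t ^ 2}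
  apply le_antisymm
  · simp only [J, Ideal.span_le, Set.insert_subset_iff, Set.singleton_subset_iff, SetLike.mem_coe,
      Ideal.mem_span_pair]
    exact ⟨⟨2, 0, by ring⟩, ⟨3 * t, 1, by ring⟩, ⟨c * t, 0, by ring⟩⟩
  · have ht : t ∈ J := by
      have h : 2 * t ∈ J := Ideal.subset_span (by simp)
      simpa [← mul_assoc] using J.mul_mem_left ((h2.unit⁻¹ : Rˣ) : R) h
    have ha : a ∈ J := by
      have h : 3 * t ^ 2 + a ∈ J := Ideal.subset_span (by simp)
      simpa [sq, mul_assoc] using J.sub_mem h (J.mul_mem_left (3 * t) ht)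
    simpa [Ideal.span_le, Set.insert_subset_iff] using ⟨ht, ha⟩

section

variable {R : Type*} [CommRing R] (k : ℕ)

noncomputable def coeffsAlongX0 : MvPowerSeries (Fin 2) R →ₗ[R] Fin k → R :=
  LinearMap.pi fun i => coeff (Finsupp.single 0 (i : ℕ))

theorem coeffsAlongX0_surjective : Function.Surjective (coeffsAlongX0 (R := R) k) := by
  intro v
  refine ⟨∑ i : Fin k, monomial (Finsupp.single 0 (i : ℕ)) (v i), funext fun j => ?_⟩
  simp [coeffsAlongX0, coeff_monomial, (Finsupp.single_injective _).eq_iff, Fin.val_inj]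

theorem coeffsAlongX0_eq_zero_of_mem {f : MvPowerSeries (Fin 2) R}
    (hf : f ∈ Ideal.span {X 1, X 0 ^ k}) : coeffsAlongX0 k f = 0 := by
  obtain ⟨a, b, rfl⟩ := Ideal.mem_span_pair.1 hf
  funext i
  have h1 : coeff (Finsupp.single 0 (i : ℕ)) (a * X 1) = 0 :=
    X_dvd_iff.1 (dvd_mul_left _ _) _ (by simp)
  have h2 : coeff (Finsupp.single 0 (i : ℕ)) (b * X 0 ^ k) = 0 :=
    X_pow_dvd_iff.1 (dvd_mul_left _ _) _ (by simp)
  simp [coeffsAlongX0, h1, h2]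

theorem mem_of_coeffsAlongX0_eq_zero {f : MvPowerSeries (Fin 2) R}
    (hf : coeffsAlongX0 k f = 0) : f ∈ Ideal.span {X 1, X 0 ^ k} := by
  set f₀ : MvPowerSeries (Fin 2) R := fun e => if e 1 = 0 then coeff e f else 0
  have coeff_f₀ (m : Fin 2 →₀ ℕ) : coeff m f₀ = if m 1 = 0 then coeff m f else 0 := rfl
  have hX1 : X 1 ∣ f - f₀ := X_dvd_iff.2 fun m hm => by simp [coeff_f₀, hm]
  have hX0 : X 0 ^ k ∣ f₀ := X_pow_dvd_iff.2 fun m hm => by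
    rw [coeff_f₀]
    split_ifs with h
    · have hsingle : m = Finsupp.single 0 (m 0) := by
        ext j
        fin_cases j <;> simp [h]
      rw [hsingle]
      exact congrFun hf ⟨m 0, hm⟩
    · rfl
  obtain ⟨g, hg⟩ := hX1
  obtain ⟨h, hh⟩ := hX0
  exact Ideal.mem_span_pair.2 ⟨g, h, by linear_combination -hg - hh⟩

theorem ker_coeffsAlongX0 :
    LinearMap.ker (coeffsAlongX0 (R := R) k) =
      (Ideal.span {X 1, X 0 ^ k} : Ideal (MvPowerSeries (Fin 2) R)).restrictScalars R := by
  ext f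
  exact ⟨mem_of_coeffsAlongX0_eq_zero k, coeffsAlongX0_eq_zero_of_mem k⟩

theorem finrank_quotient_span_X_one_X_zero_pow [Nontrivial R] :
    Module.finrank R
      (MvPowerSeries (Fin 2) R ⧸ Ideal.span {(X 1 : MvPowerSeries (Fin 2) R), X 0 ^ k}) = k := by
  have e₁ := (Submodule.Quotient.restrictScalarsEquiv R
    (Ideal.span {(X 1 : MvPowerSeries (Fin 2) R), X 0 ^ k})).symm
  have e₂ := Submodule.quotEquivOfEq _ _ (ker_coeffsAlongX0 (R := R) k)
  have e₃ := (coeffsAlongX0 (R := R) k).quotKerEquivOfSurjective (coeffsAlongX0_surjective k)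
  rw [(e₁.trans (e₂.symm.trans e₃)).finrank_eq, Module.finrank_fin_fun]

end

theorem stmt_4_general (k : ℕ) :
    (Ideal.span {(2 : MvPowerSeries (Fin 2) ℂ) * MvPowerSeries.X 1,
        (3 : MvPowerSeries (Fin 2) ℂ) * (MvPowerSeries.X 1) ^ 2 +
          (MvPowerSeries.X 0 : MvPowerSeries (Fin 2) ℂ) ^ k,
        -(((2 * k : ℕ) : MvPowerSeries (Fin 2) ℂ) *
          (MvPowerSeries.X 0) ^ (k - 1) * (MvPowerSeries.X 1) ^ 2)} =
      Ideal.span {(MvPowerSeries.X 1 : MvPowerSeries (Fin 2) ℂ),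
        (MvPowerSeries.X 0 : MvPowerSeries (Fin 2) ℂ) ^ k}) ∧
    Module.finrank ℂ
      (MvPowerSeries (Fin 2) ℂ ⧸
        Ideal.span {(2 : MvPowerSeries (Fin 2) ℂ) * MvPowerSeries.X 1,
          (3 : MvPowerSeries (Fin 2) ℂ) * (MvPowerSeries.X 1) ^ 2 +
            (MvPowerSeries.X 0 : MvPowerSeries (Fin 2) ℂ) ^ k,
          -(((2 * k : ℕ) : MvPowerSeries (Fin 2) ℂ) *
            (MvPowerSeries.X 0) ^ (k - 1) * (MvPowerSeries.X 1) ^ 2)}) = k := by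
  have two_isUnit : IsUnit (2 : MvPowerSeries (Fin 2) ℂ) := by
    simpa only [map_ofNat] using (isUnit_of_invertible (2 : ℂ)).map (C (σ := Fin 2))
  have hJ := Ideal.span_two_mul_three_mul_sq_add_mul_sq two_isUnit (X 1) (X 0 ^ k)
    (-(((2 * k : ℕ) : MvPowerSeries (Fin 2) ℂ) * X 0 ^ (k - 1)))
  rw [neg_mul] at hJ
  exact ⟨hJ, hJ ▸ finrank_quotient_span_X_one_X_zero_pow k⟩

/-- For the germ `Φ₋ₖ(s,t) = (s, t², t³ + sᵏt)`, the Jacobian minor ideal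
`J = (2t, 3t² + sᵏ, −2k sᵏ⁻¹t²)` of `R = ℂ[[s,t]]` equals `(t, sᵏ)` and has
codimension `k`; hence `C(Φ₋ₖ) = k` and the sign-refined Smale invariant is `−k`. -/
theorem stmt_4 (k : ℕ) (hk : 1 ≤ k) :
    (Ideal.span {(2 : MvPowerSeries (Fin 2) ℂ) * MvPowerSeries.X 1,
        (3 : MvPowerSeries (Fin 2) ℂ) * (MvPowerSeries.X 1) ^ 2 +
          (MvPowerSeries.X 0 : MvPowerSeries (Fin 2) ℂ) ^ k,
        -(((2 * k : ℕ) : MvPowerSeries (Fin 2) ℂ) *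
          (MvPowerSeries.X 0) ^ (k - 1) * (MvPowerSeries.X 1) ^ 2)} =
      Ideal.span {(MvPowerSeries.X 1 : MvPowerSeries (Fin 2) ℂ),
        (MvPowerSeries.X 0 : MvPowerSeries (Fin 2) ℂ) ^ k}) ∧
    Module.finrank ℂ
      (MvPowerSeries (Fin 2) ℂ ⧸
        Ideal.span {(2 : MvPowerSeries (Fin 2) ℂ) * MvPowerSeries.X 1,
          (3 : MvPowerSeries (Fin 2) ℂ) * (MvPowerSeries.X 1) ^ 2 +
            (MvPowerSeries.X 0 : MvPowerSeries (Fin 2) ℂ) ^ k,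
          -(((2 * k : ℕ) : MvPowerSeries (Fin 2) ℂ) *
            (MvPowerSeries.X 0) ^ (k - 1) * (MvPowerSeries.X 1) ^ 2)}) = k :=
  stmt_4_general k
end

section
/- Fix a real number ε > 0 and define f̃ : ℂ² → ℂ³ by f̃(s,t) = (s² + 2ε·conj(s), st + ε·conj(s), t). Then f̃ is differentiable as a map of real vector spaces at every point, and the set of points p ∈ ℂ² at which the real derivative of f̃ (an ℝ-linear map ℂ² → ℂ³) is not injective equals {(s,t) ∈ ℂ² : s = t and |s| = ε}. -/
/-! The real derivative of `f̃` at `(s, t)` is `(u, v) ↦ (2su + 2εū, sv + tu + εū, v)`, so its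
kernel consists of the `(u, 0)` with `su + εū = 0 = tu + εū`. A nonzero such `u` forces `s = t`,
and taking norms gives `‖s‖ = ε`; conversely, when `‖s‖ = ε` such a `u` exists. -/

open ComplexConjugate

namespace Complex

theorem exists_ne_zero_mul_add_conj_eq_zero_iff (s : ℂ) (ε : ℝ) :
    (∃ u ≠ 0, s * u + ε * conj u = 0) ↔ ‖s‖ = |ε| := by
  constructor
  · rintro ⟨u, hu, hsu⟩
    have hnorm : ‖s‖ * ‖u‖ = |ε| * ‖u‖ := by
      rw [← norm_mul, eq_neg_of_add_eq_zero_left hsu]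
      simp
    exact mul_right_cancel₀ (norm_ne_zero_iff.mpr hu) hnorm
  · intro hs
    rcases eq_or_ne s 0 with rfl | hs0
    · have hε : ε = 0 := abs_eq_zero.mp (by simpa using hs.symm)
      exact ⟨1, one_ne_zero, by simp [hε]⟩
    -- A square root `u` of `-ε s̄` has `s u² = -ε ‖s‖²` and `ε ‖u‖² = ε ‖s‖²`.
    obtain ⟨u, hu⟩ := IsAlgClosed.exists_pow_nat_eq (-ε * conj s) two_pos
    have hε : ε ≠ 0 := by
      rintro rfl
      simp_all
    have hu0 : u ≠ 0 := by
      rintro rfl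
      simp_all
    have hnorm_u : ‖u‖ = ‖s‖ := by
      refine (pow_left_inj₀ (norm_nonneg _) (norm_nonneg _) two_ne_zero).mp ?_
      rw [← norm_pow, hu]
      simp [hs, sq]
    refine ⟨u, hu0, (mul_eq_zero.mp ?_).resolve_right hu0⟩
    calc (s * u + ε * conj u) * u = s * u ^ 2 + ε * (u * conj u) := by ring
      _ = 0 := by
        rw [hu, mul_conj', hnorm_u, ← mul_conj']
        ring

end Complex

noncomputable section

open ContinuousLinearMap

def perturbedCrossCap (ε : ℝ) (p : ℂ × ℂ) : ℂ × ℂ × ℂ :=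
  (p.1 ^ 2 + 2 * (ε : ℂ) * conj p.1, p.1 * p.2 + (ε : ℂ) * conj p.1, p.2)

def perturbedCrossCapDeriv (ε : ℝ) (p : ℂ × ℂ) : ℂ × ℂ →L[ℝ] ℂ × ℂ × ℂ :=
  let conjFst := Complex.conjCLE.toContinuousLinearMap.comp (fst ℝ ℂ ℂ)
  ((2 * p.1) • fst ℝ ℂ ℂ + (2 * ε : ℂ) • conjFst).prod
    ((p.1 • snd ℝ ℂ ℂ + p.2 • fst ℝ ℂ ℂ + (ε : ℂ) • conjFst).prod (snd ℝ ℂ ℂ))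

@[simp]
theorem perturbedCrossCapDeriv_apply (ε : ℝ) (s t u v : ℂ) :
    perturbedCrossCapDeriv ε (s, t) (u, v) =
      (2 * s * u + 2 * ε * conj u, s * v + t * u + ε * conj u, v) := by
  simp [perturbedCrossCapDeriv]

theorem hasFDerivAt_perturbedCrossCap (ε : ℝ) (p : ℂ × ℂ) :
    HasFDerivAt (perturbedCrossCap ε) (perturbedCrossCapDeriv ε p) p := by
  have h1 : HasFDerivAt (fun p : ℂ × ℂ => p.1) (fst ℝ ℂ ℂ) p := hasFDerivAt_fst
  have h2 : HasFDerivAt (fun p : ℂ × ℂ => p.2) (snd ℝ ℂ ℂ) p := hasFDerivAt_snd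
  have hconj : HasFDerivAt (fun p : ℂ × ℂ => conj p.1)
      (Complex.conjCLE.toContinuousLinearMap.comp (fst ℝ ℂ ℂ)) p :=
    Complex.conjCLE.hasFDerivAt.comp p h1
  refine (((h1.pow 2).add (hconj.const_mul (2 * (ε : ℂ)))).prodMk
    (((h1.mul h2).add (hconj.const_mul (ε : ℂ))).prodMk h2)).congr_fderiv
      (ContinuousLinearMap.ext fun ⟨u, v⟩ => ?_)
  obtain ⟨s, t⟩ := p
  simp

theorem perturbedCrossCapDeriv_eq_zero_iff (ε : ℝ) (s t u v : ℂ) :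
    perturbedCrossCapDeriv ε (s, t) (u, v) = 0 ↔
      v = 0 ∧ s * u + ε * conj u = 0 ∧ t * u + ε * conj u = 0 := by
  simp only [perturbedCrossCapDeriv_apply, Prod.mk_eq_zero]
  constructor
  · rintro ⟨h1, h2, rfl⟩
    exact ⟨rfl, by linear_combination h1 / 2, by linear_combination h2⟩
  · rintro ⟨rfl, h1, h2⟩
    exact ⟨by linear_combination 2 * h1, by linear_combination h2, rfl⟩

theorem not_injective_perturbedCrossCapDeriv_iff (ε : ℝ) (s t : ℂ) :
    ¬ Function.Injective (perturbedCrossCapDeriv ε (s, t)) ↔ s = t ∧ ‖s‖ = |ε| := by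
  rw [injective_iff_map_eq_zero, ← Complex.exists_ne_zero_mul_add_conj_eq_zero_iff]
  push Not
  constructor
  · rintro ⟨⟨u, v⟩, hD, hne⟩
    obtain ⟨rfl, hs, ht⟩ := (perturbedCrossCapDeriv_eq_zero_iff ε s t u v).mp hD
    have hu : u ≠ 0 := by rintro rfl; exact hne rfl
    have hst : (s - t) * u = 0 := by linear_combination hs - ht
    exact ⟨sub_eq_zero.mp ((mul_eq_zero.mp hst).resolve_right hu), u, hu, hs⟩
  · rintro ⟨rfl, u, hu, hs⟩
    exact ⟨(u, 0), (perturbedCrossCapDeriv_eq_zero_iff ε s s u 0).mpr ⟨rfl, hs, hs⟩,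
      fun h => hu (congrArg Prod.fst h)⟩

end

/-- The perturbed cross cap `f̃(s,t) = (s² + 2ε·conj s, st + ε·conj s, t)` is real
differentiable everywhere, and its singular locus (points where the real derivative
is not injective) is `{(s,t) : s = t, |s| = ε}`. -/
theorem stmt_9 (ε : ℝ) (hε : 0 < ε) (f : ℂ × ℂ → ℂ × ℂ × ℂ)
    (hf : ∀ s t : ℂ, f (s, t) =
      (s ^ 2 + 2 * (ε : ℂ) * (starRingEnd ℂ) s,
       s * t + (ε : ℂ) * (starRingEnd ℂ) s, t)) :
    (∀ p : ℂ × ℂ, DifferentiableAt ℝ f p) ∧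
    {p : ℂ × ℂ | ¬ Function.Injective (fderiv ℝ f p)} =
      {p : ℂ × ℂ | p.1 = p.2 ∧ ‖p.1‖ = ε} := by
  obtain rfl : f = perturbedCrossCap ε := funext fun p => hf p.1 p.2
  refine ⟨fun p => (hasFDerivAt_perturbedCrossCap ε p).differentiableAt, ?_⟩
  ext ⟨s, t⟩
  simp only [Set.mem_ofPred_eq, (hasFDerivAt_perturbedCrossCap ε _).fderiv,
    not_injective_perturbedCrossCapDeriv_iff, abs_of_pos hε]
end

section
/- Fix a real number ε > 0 and define f̃ : ℂ² → ℂ³ by f̃(s,t) = (s² + 2ε·conj(s), st + ε·conj(s), t). For all (s,t), (s',t') ∈ ℂ² with (s,t) ≠ (s',t'), one has f̃(s,t) = f̃(s',t') if and only if t' = t, s' = 2t − s, s ≠ t, and (s − t)·t + ε·(conj(s) − conj(t)) = 0. -/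
/-- Description of the double points of the perturbed cross cap
`f̃(s,t) = (s² + 2ε·conj s, st + ε·conj s, t)`: for `(s,t) ≠ (s',t')` one has
`f̃(s,t) = f̃(s',t')` iff `t' = t`, `s' = 2t − s`, `s ≠ t` and
`(s − t)t + ε(conj s − conj t) = 0`. -/
theorem stmt_10 (ε : ℝ) (hε : 0 < ε) (f : ℂ × ℂ → ℂ × ℂ × ℂ)
    (hf : ∀ s t : ℂ, f (s, t) =
      (s ^ 2 + 2 * (ε : ℂ) * (starRingEnd ℂ) s,
       s * t + (ε : ℂ) * (starRingEnd ℂ) s, t)) :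
    ∀ s t s' t' : ℂ, (s, t) ≠ (s', t') →
      (f (s, t) = f (s', t') ↔
        t' = t ∧ s' = 2 * t - s ∧ s ≠ t ∧
          (s - t) * t + (ε : ℂ) * ((starRingEnd ℂ) s - (starRingEnd ℂ) t) = 0) := by
  intro s t s' t' hne
  rw [hf, hf, Prod.mk.injEq, Prod.mk.injEq]
  constructor
  · rintro ⟨h1, h2, h3⟩
    subst h3
    have hss : s ≠ s' := by rintro rfl; exact hne rfl
    have key : (s - s') * (s + s' - 2 * t) = 0 := by
      linear_combination h1 - 2 * h2
    have hsum : s + s' - 2 * t = 0 := by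
      rcases mul_eq_zero.mp key with h | h
      · exact absurd (sub_eq_zero.mp h) hss
      · exact h
    have hs' : s' = 2 * t - s := by linear_combination hsum
    have hst : s ≠ t := by
      rintro rfl
      exact hss (by linear_combination -hs')
    subst hs'
    have hc : (starRingEnd ℂ) (2 * t - s)
        = 2 * (starRingEnd ℂ) t - (starRingEnd ℂ) s := by
      rw [map_sub, map_mul, map_ofNat]
    exact ⟨rfl, rfl, hst, by linear_combination h2 / 2 + (ε : ℂ) / 2 * hc⟩
  · rintro ⟨rfl, rfl, hst, heq⟩
    have hc : (starRingEnd ℂ) (2 * t' - s)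
        = 2 * (starRingEnd ℂ) t' - (starRingEnd ℂ) s := by
      rw [map_sub, map_mul, map_ofNat]
    refine ⟨?_, ?_, rfl⟩
    · linear_combination 4 * heq - 2 * (ε : ℂ) * hc
    · linear_combination 2 * heq - (ε : ℂ) * hc
end

section
/- Fix a real number ε > 0 and define f̃ : ℂ² → ℂ³ by f̃(s,t) = (s² + 2ε·conj(s), st + ε·conj(s), t). Then f̃ has no triple values: there do not exist three pairwise distinct points p₁, p₂, p₃ ∈ ℂ² with f̃(p₁) = f̃(p₂) = f̃(p₃). -/
private lemma crosscap_key (ε : ℝ) (hε : 0 < ε) (s₁ s₂ t : ℂ) (h : s₁ ≠ s₂)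
    (h1 : s₁ ^ 2 + 2 * (ε : ℂ) * (starRingEnd ℂ) s₁
        = s₂ ^ 2 + 2 * (ε : ℂ) * (starRingEnd ℂ) s₂)
    (h2 : s₁ * t + (ε : ℂ) * (starRingEnd ℂ) s₁
        = s₂ * t + (ε : ℂ) * (starRingEnd ℂ) s₂) :
    s₁ + s₂ = 2 * t := by
  have hd : s₁ - s₂ ≠ 0 := sub_ne_zero.mpr h
  have e2 : (ε : ℂ) * ((starRingEnd ℂ) s₁ - (starRingEnd ℂ) s₂) = -(s₁ - s₂) * t := by
    linear_combination h2
  have e1 : (s₁ - s₂) * (s₁ + s₂) = (s₁ - s₂) * (2 * t) := by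
    linear_combination h1 - 2 * e2
  exact mul_left_cancel₀ hd e1

/-- The perturbed cross cap `f̃(s,t) = (s² + 2ε·conj s, st + ε·conj s, t)` has no
triple values. -/
theorem stmt_11 (ε : ℝ) (hε : 0 < ε) (f : ℂ × ℂ → ℂ × ℂ × ℂ)
    (hf : ∀ s t : ℂ, f (s, t) =
      (s ^ 2 + 2 * (ε : ℂ) * (starRingEnd ℂ) s,
       s * t + (ε : ℂ) * (starRingEnd ℂ) s, t)) :
    ¬ ∃ p₁ p₂ p₃ : ℂ × ℂ, p₁ ≠ p₂ ∧ p₁ ≠ p₃ ∧ p₂ ≠ p₃ ∧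
      f p₁ = f p₂ ∧ f p₂ = f p₃ := by
  rintro ⟨⟨s₁, t₁⟩, ⟨s₂, t₂⟩, ⟨s₃, t₃⟩, h12, h13, h23, he1, he2⟩
  rw [hf, hf] at he1
  rw [hf, hf] at he2
  simp only [Prod.mk.injEq] at he1 he2 h12 h13 h23
  obtain ⟨a1, b1, c1⟩ := he1
  obtain ⟨a2, b2, c2⟩ := he2
  subst c1; subst c2
  have hs12 : s₁ ≠ s₂ := fun h => h12 (by rw [h])
  have hs23 : s₂ ≠ s₃ := fun h => h23 (by rw [h])
  have k1 := crosscap_key ε hε s₁ s₂ t₁ hs12 a1 b1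
  have k2 := crosscap_key ε hε s₂ s₃ t₁ hs23 a2 b2
  have : s₁ = s₃ := by linear_combination k1 - k2
  exact h13 (by rw [this])
end

section
/- Fix a real number ε > 0. The double point set {(s,t) ∈ ℂ² : s ≠ t and (s − t)·t + ε·(conj(s) − conj(t)) = 0} equals the parametrized set {(−ε·e^{−2iα} + ρ·e^{iα}, −ε·e^{−2iα}) : ρ ∈ ℝ, ρ > 0, α ∈ ℝ}. -/
open Complex ComplexConjugate

/-!
Write `s - t = ρ e^{iα}` in polar form. Then `conj (s - t) = (s - t) e^{-2iα}`, so the defining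
equation factors as `(s - t) (t + ε e^{-2iα}) = 0`; for `s ≠ t` it says exactly `t = -ε e^{-2iα}`.
-/

lemma conj_ofReal_mul_exp_mul_I (ρ α : ℝ) :
    conj ((ρ : ℂ) * exp (α * I)) = ρ * exp (α * I) * exp (-(2 * α) * I) := by
  rw [map_mul, conj_ofReal, ← exp_conj, mul_assoc, ← exp_add]
  congr 2
  simp only [map_mul, conj_ofReal, conj_I]
  ring

lemma double_point_eq_iff {ε ρ α : ℝ} {s t : ℂ} (hρ : ρ ≠ 0)
    (hst : s - t = ρ * exp (α * I)) :
    (s - t) * t + (ε : ℂ) * (conj s - conj t) = 0 ↔ t = -(ε : ℂ) * exp (-(2 * α) * I) := by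
  have hw : (ρ : ℂ) * exp (α * I) ≠ 0 := mul_ne_zero (ofReal_ne_zero.mpr hρ) (exp_ne_zero _)
  have factor : (s - t) * t + (ε : ℂ) * (conj s - conj t)
      = ρ * exp (α * I) * (t + ε * exp (-(2 * α) * I)) := by
    rw [← map_sub, hst, conj_ofReal_mul_exp_mul_I]
    ring
  rw [factor, mul_eq_zero, or_iff_right hw, add_eq_zero_iff_eq_neg, neg_mul (ε : ℂ)]

theorem stmt_12_general (ε : ℝ) :
    {p : ℂ × ℂ | p.1 ≠ p.2 ∧
        (p.1 - p.2) * p.2 +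
          (ε : ℂ) * ((starRingEnd ℂ) p.1 - (starRingEnd ℂ) p.2) = 0} =
      {p : ℂ × ℂ | ∃ ρ α : ℝ, 0 < ρ ∧
        p = (-(ε : ℂ) * Complex.exp (-(2 * α) * Complex.I) +
              (ρ : ℂ) * Complex.exp (α * Complex.I),
            -(ε : ℂ) * Complex.exp (-(2 * α) * Complex.I))} := by
  ext ⟨s, t⟩
  simp only [Set.mem_ofPred_eq, Prod.mk.injEq]
  constructor
  · rintro ⟨hne, heq⟩
    have hρ : 0 < ‖s - t‖ := norm_pos_iff.mpr (sub_ne_zero.mpr hne)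
    have hst := (norm_mul_exp_arg_mul_I (s - t)).symm
    have ht := (double_point_eq_iff hρ.ne' hst).mp heq
    refine ⟨‖s - t‖, arg (s - t), hρ, ?_, ht⟩
    rw [← ht, ← hst]
    ring
  · rintro ⟨ρ, α, hρ, hs, ht⟩
    have hst : s - t = ρ * exp (α * I) := by rw [hs, ht]; ring
    refine ⟨fun h => ?_, (double_point_eq_iff hρ.ne' hst).mpr ht⟩
    rw [h, sub_self, eq_comm] at hst
    exact mul_ne_zero (ofReal_ne_zero.mpr hρ.ne') (exp_ne_zero _) hst

/-- Parametrization of the double point set of the perturbed cross cap: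
`{(s,t) : s ≠ t, (s−t)t + ε(conj s − conj t) = 0}` equals
`{(−ε e^{−2iα} + ρ e^{iα}, −ε e^{−2iα}) : ρ > 0, α ∈ ℝ}`. -/
theorem stmt_12 (ε : ℝ) (hε : 0 < ε) :
    {p : ℂ × ℂ | p.1 ≠ p.2 ∧
        (p.1 - p.2) * p.2 +
          (ε : ℂ) * ((starRingEnd ℂ) p.1 - (starRingEnd ℂ) p.2) = 0} =
      {p : ℂ × ℂ | ∃ ρ α : ℝ, 0 < ρ ∧
        p = (-(ε : ℂ) * Complex.exp (-(2 * α) * Complex.I) +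
              (ρ : ℂ) * Complex.exp (α * Complex.I),
            -(ε : ℂ) * Complex.exp (-(2 * α) * Complex.I))} :=
  stmt_12_general ε
end

section
/- Fix a real number ε > 0 and define f̃ : ℂ² → ℂ³ by f̃(s,t) = (s² + 2ε·conj(s), st + ε·conj(s), t). There exists δ₀ with 0 < δ₀ < ε such that for every real δ with 0 < δ < δ₀ the following holds: the only solution of the equation f̃(s,t) = (−δw + ε²(conj(w)² − 2w), ε²(conj(w)² − w), −ε·conj(w)) with (s,t) ∈ ℂ², w ∈ ℂ and |w| ≤ 1 is w = 0 and (s,t) = (0,0). -/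
/-!
Put `u = s + ε·conj w`. The third coordinate forces `t = −ε·conj w`; then the first equation
minus twice the second reads `u² = −δw`, and the second, divided by `ε`, reads
`conj u = u·conj w`. Multiplying the latter by `u` gives `|u|² = u²·conj w = −δ|w|²`,
and since `δ > 0` both sides vanish.
-/

open ComplexConjugate

theorem Complex.eq_zero_of_sq_eq_neg_mul_of_conj_eq_mul_conj {δ : ℝ} (hδ : 0 < δ) {u w : ℂ}
    (hsq : u ^ 2 = -δ * w) (hconj : conj u = u * conj w) : u = 0 ∧ w = 0 := by
  have hnormC : ((‖u‖ ^ 2 : ℝ) : ℂ) = ((-δ * ‖w‖ ^ 2 : ℝ) : ℂ) := by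
    push_cast
    rw [← Complex.mul_conj', ← Complex.mul_conj', hconj]
    linear_combination conj w * hsq
  have hnorm : ‖u‖ ^ 2 = -δ * ‖w‖ ^ 2 := Complex.ofReal_injective hnormC
  have hw : ‖w‖ ^ 2 = 0 := by nlinarith [sq_nonneg ‖u‖, sq_nonneg ‖w‖]
  have hu : ‖u‖ ^ 2 = 0 := by rw [hnorm, hw, mul_zero]
  exact ⟨by simpa using hu, by simpa using hw⟩

theorem eq_zero_of_crossCap_perturbation_eq_membrane {ε δ : ℝ} (hε : ε ≠ 0) (hδ : 0 < δ)
    {s t w : ℂ}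
    (h₁ : s ^ 2 + 2 * ε * conj s = -δ * w + ε ^ 2 * (conj w ^ 2 - 2 * w))
    (h₂ : s * t + ε * conj s = ε ^ 2 * (conj w ^ 2 - w))
    (h₃ : t = -ε * conj w) :
    w = 0 ∧ s = 0 ∧ t = 0 := by
  subst h₃
  have hsq : (s + ε * conj w) ^ 2 = -δ * w := by linear_combination h₁ - 2 * h₂
  have hconj : conj (s + ε * conj w) = (s + ε * conj w) * conj w := by
    have hε' : (ε : ℂ) ≠ 0 := Complex.ofReal_ne_zero.mpr hε
    simp only [map_add, map_mul, Complex.conj_conj, Complex.conj_ofReal]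
    exact mul_left_cancel₀ hε' (by linear_combination h₂)
  obtain ⟨hu, rfl⟩ := Complex.eq_zero_of_sq_eq_neg_mul_of_conj_eq_mul_conj hδ hsq hconj
  simpa using hu

/-- The membrane `H` filling in the shifted singular value curve `Σ'` of the perturbed
cross cap `f̃(s,t) = (s² + 2ε·conj s, st + ε·conj s, t)` meets the image of `f̃` only at
the origin: for all small `δ > 0`, the only solution of
`f̃(s,t) = (−δw + ε²(conj(w)² − 2w), ε²(conj(w)² − w), −ε·conj w)` with `|w| ≤ 1` is
`w = 0`, `(s,t) = (0,0)`. -/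
theorem stmt_13 (ε : ℝ) (hε : 0 < ε) (f : ℂ × ℂ → ℂ × ℂ × ℂ)
    (hf : ∀ s t : ℂ, f (s, t) =
      (s ^ 2 + 2 * (ε : ℂ) * (starRingEnd ℂ) s,
       s * t + (ε : ℂ) * (starRingEnd ℂ) s, t)) :
    ∃ δ₀ : ℝ, 0 < δ₀ ∧ δ₀ < ε ∧
      ∀ δ : ℝ, 0 < δ → δ < δ₀ →
        ∀ s t w : ℂ, ‖w‖ ≤ 1 →
          f (s, t) =
            (-(δ : ℂ) * w + (ε : ℂ) ^ 2 * (((starRingEnd ℂ) w) ^ 2 - 2 * w),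
             (ε : ℂ) ^ 2 * (((starRingEnd ℂ) w) ^ 2 - w),
             -(ε : ℂ) * (starRingEnd ℂ) w) →
          w = 0 ∧ s = 0 ∧ t = 0 := by
  refine ⟨ε / 2, half_pos hε, half_lt_self hε, fun δ hδ _ s t w _ heq => ?_⟩
  simp only [hf, Prod.mk.injEq] at heq
  obtain ⟨h₁, h₂, h₃⟩ := heq
  exact eq_zero_of_crossCap_perturbation_eq_membrane hε.ne' hδ h₁ h₂ h₃
end

section
/- Let Φ : ℂ² → ℂ³ be the cross cap, Φ(s,t) = (s², st, t). Then: (i) there is a unique real number ξ with 0 < ξ < 1 and ξ³ + ξ² − 1 = 0; (ii) the intersection of the image Φ(ℂ²) with the membrane H = {(z, (√(1 − |z|²) : ℂ), conj(z)) : z ∈ ℂ, |z| ≤ 1} ⊆ ℂ³ consists of exactly one point, namely (ξ, (ξ·√ξ : ℂ), ξ). -/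
/-!
A point `Φ(s, t) = (s², st, t)` lies on the membrane `H` over `z` iff `s² = z`, `t = conj z` and
`st = √(1 - |z|²)`. Then `s · conj(s)² = |s|² · conj s` is a nonnegative real number, which forces
`s = r ≥ 0` to be real, and squaring `r³ = √(1 - r⁴)` shows that `u = r²` solves
`u³ + u² - 1 = 0`. This cubic is strictly increasing on `[0, ∞)` and changes sign on `[0, 1]`,
so it has exactly one root `ξ` there, giving the single point `(ξ, ξ√ξ, ξ)`.
-/

open Complex ComplexConjugate Set

def crossCap (p : ℂ × ℂ) : ℂ × ℂ × ℂ := (p.1 ^ 2, p.1 * p.2, p.2)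

def membrane : Set (ℂ × ℂ × ℂ) :=
  {y | ∃ z : ℂ, ‖z‖ ≤ 1 ∧ y = (z, ((Real.sqrt (1 - ‖z‖ ^ 2) : ℝ) : ℂ), conj z)}

lemma strictMonoOn_cubic : StrictMonoOn (fun x : ℝ => x ^ 3 + x ^ 2 - 1) (Ici 0) := by
  intro a ha b _ hab
  have h2 : a ^ 2 < b ^ 2 := pow_lt_pow_left₀ hab ha two_ne_zero
  have h3 : a ^ 3 < b ^ 3 := pow_lt_pow_left₀ hab ha three_ne_zero
  simp only
  linarith

lemma exists_cubic_root : ∃ ξ ∈ Ioo (0 : ℝ) 1, ξ ^ 3 + ξ ^ 2 - 1 = 0 :=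
  intermediate_value_Ioo zero_le_one (by fun_prop) (by norm_num)

lemma existsUnique_cubic_root : ∃! ξ : ℝ, 0 < ξ ∧ ξ < 1 ∧ ξ ^ 3 + ξ ^ 2 - 1 = 0 := by
  obtain ⟨ξ, ⟨hξ0, hξ1⟩, hξ⟩ := exists_cubic_root
  refine ⟨ξ, ⟨hξ0, hξ1, hξ⟩, fun η ⟨hη0, _, hη⟩ => ?_⟩
  exact strictMonoOn_cubic.injOn (mem_Ici.2 hη0.le) (mem_Ici.2 hξ0.le) (hη.trans hξ.symm)

lemma Complex.exists_nonneg_real_of_mul_conj_sq_eq {s : ℂ} {c : ℝ} (hc : 0 ≤ c)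
    (h : s * conj s ^ 2 = c) : ∃ r : ℝ, 0 ≤ r ∧ s = r := by
  rcases eq_or_ne s 0 with rfl | hs
  · exact ⟨0, le_rfl, by simp⟩
  have hn : 0 < normSq s := normSq_pos.2 hs
  have hconj : conj s = ((c / normSq s : ℝ) : ℂ) := by
    rw [ofReal_div, eq_div_iff (ofReal_ne_zero.2 hn.ne'), ← h, ← mul_conj]
    ring
  refine ⟨c / normSq s, div_nonneg hc hn.le, ?_⟩
  simpa using congrArg conj hconj

lemma sqrt_one_sub_sq_of_cubic {ξ : ℝ} (hξ : 0 ≤ ξ) (h : ξ ^ 3 + ξ ^ 2 - 1 = 0) :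
    Real.sqrt (1 - ξ ^ 2) = ξ * Real.sqrt ξ := by
  rw [show 1 - ξ ^ 2 = ξ ^ 2 * ξ by linarith, Real.sqrt_mul (sq_nonneg ξ), Real.sqrt_sq hξ]

lemma cubic_of_pow_three_eq_sqrt {r : ℝ} (hr1 : r ^ 2 ≤ 1)
    (h : r ^ 3 = Real.sqrt (1 - (r ^ 2) ^ 2)) :
    0 < r ^ 2 ∧ r ^ 2 < 1 ∧ (r ^ 2) ^ 3 + (r ^ 2) ^ 2 - 1 = 0 := by
  have hcubic : (r ^ 2) ^ 3 + (r ^ 2) ^ 2 - 1 = 0 := by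
    have := congrArg (· ^ 2) h
    simp only [Real.sq_sqrt (by nlinarith : 0 ≤ 1 - (r ^ 2) ^ 2)] at this
    linear_combination this
  refine ⟨?_, lt_of_le_of_ne hr1 fun h1 => by norm_num [h1] at hcubic, hcubic⟩
  exact lt_of_le_of_ne (sq_nonneg r) fun h0 => by norm_num [← h0] at hcubic

lemma mem_range_crossCap_inter_membrane {y : ℂ × ℂ × ℂ} :
    y ∈ range crossCap ∩ membrane ↔
      ∃ u : ℝ, 0 < u ∧ u < 1 ∧ u ^ 3 + u ^ 2 - 1 = 0 ∧
        y = ((u : ℂ), ((u * Real.sqrt u : ℝ) : ℂ), (u : ℂ)) := by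
  constructor
  · rintro ⟨⟨⟨s, t⟩, rfl⟩, z, hz, hy⟩
    simp only [crossCap, Prod.mk.injEq] at hy
    obtain ⟨rfl, hst, rfl⟩ := hy
    have hkey : s * conj s ^ 2 = (Real.sqrt (1 - ‖s ^ 2‖ ^ 2) : ℂ) := by
      rw [← hst, map_pow]
    obtain ⟨r, hr, rfl⟩ := exists_nonneg_real_of_mul_conj_sq_eq (Real.sqrt_nonneg _) hkey
    have hnorm : ‖(r : ℂ) ^ 2‖ = r ^ 2 := by
      rw [← ofReal_pow, norm_real, Real.norm_of_nonneg (sq_nonneg r)]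
    rw [hnorm] at hz hkey
    have hr3 : r ^ 3 = Real.sqrt (1 - (r ^ 2) ^ 2) := by
      simp only [conj_ofReal] at hkey
      have : ((r ^ 3 : ℝ) : ℂ) = (Real.sqrt (1 - (r ^ 2) ^ 2) : ℂ) := by
        push_cast
        linear_combination hkey
      exact_mod_cast this
    obtain ⟨hu0, hu1, hu⟩ := cubic_of_pow_three_eq_sqrt hz hr3
    refine ⟨r ^ 2, hu0, hu1, hu, ?_⟩
    rw [Real.sqrt_sq hr]
    simp only [crossCap, map_pow, conj_ofReal, Prod.mk.injEq]
    push_cast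
    exact ⟨rfl, by ring, rfl⟩
  · rintro ⟨u, hu0, hu1, hu, rfl⟩
    refine ⟨⟨(Real.sqrt u, u), ?_⟩, u, ?_, ?_⟩
    · simp only [crossCap, ← ofReal_pow, Real.sq_sqrt hu0.le, ofReal_mul, mul_comm]
    · rw [norm_real, Real.norm_of_nonneg hu0.le]
      exact hu1.le
    · rw [norm_real, Real.norm_of_nonneg hu0.le, sqrt_one_sub_sq_of_cubic hu0.le hu, conj_ofReal]

/-- For the cross cap `Φ(s,t) = (s², st, t)`: (i) there is a unique real `ξ ∈ (0,1)`
with `ξ³ + ξ² − 1 = 0`; (ii) the image of `Φ` meets the membrane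
`H = {(z, √(1 − |z|²), conj z) : |z| ≤ 1}` in exactly the point `(ξ, ξ√ξ, ξ)`. -/
theorem stmt_14 (Φ : ℂ × ℂ → ℂ × ℂ × ℂ)
    (hΦ : ∀ s t : ℂ, Φ (s, t) = (s ^ 2, s * t, t)) :
    (∃! ξ : ℝ, 0 < ξ ∧ ξ < 1 ∧ ξ ^ 3 + ξ ^ 2 - 1 = 0) ∧
    ∀ ξ : ℝ, 0 < ξ → ξ < 1 → ξ ^ 3 + ξ ^ 2 - 1 = 0 →
      Set.range Φ ∩
        {y : ℂ × ℂ × ℂ | ∃ z : ℂ, ‖z‖ ≤ 1 ∧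
          y = (z, ((Real.sqrt (1 - ‖z‖ ^ 2) : ℝ) : ℂ), (starRingEnd ℂ) z)} =
      {((ξ : ℂ), ((ξ * Real.sqrt ξ : ℝ) : ℂ), (ξ : ℂ))} := by
  have hΦ_eq : Φ = crossCap := funext fun p => hΦ p.1 p.2
  refine ⟨existsUnique_cubic_root, fun ξ hξ0 hξ1 hξ => ?_⟩
  ext y
  rw [hΦ_eq, mem_singleton_iff]
  change y ∈ range crossCap ∩ membrane ↔ _
  rw [mem_range_crossCap_inter_membrane]
  constructor
  · rintro ⟨u, hu0, hu1, hu, rfl⟩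
    rw [existsUnique_cubic_root.unique ⟨hu0, hu1, hu⟩ ⟨hξ0, hξ1, hξ⟩]
  · rintro rfl
    exact ⟨ξ, hξ0, hξ1, hξ, rfl⟩
end

section
/- Fix ε ∈ ℂ with ε ≠ 0 and define Φ_ε : ℂ² → ℂ³ by Φ_ε(s,t) = ((s − ε)s, (t − ε)t, st). Then the set of points z ∈ ℂ² at which the complex derivative d(Φ_ε)_z : ℂ² → ℂ³ is not injective is exactly the three-element set {(0, ε/2), (ε/2, 0), (ε/2, ε/2)}. -/
/-!
The derivative of `Φ_ε` at `(s, t)` is `(h, k) ↦ ((2s - ε) h, (2t - ε) k, t h + s k)`. A map of the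
shape `(h, k) ↦ (a h, b k, c h + d k)` has a nonzero kernel vector exactly when `a = b = 0`
(the last row alone cannot be injective), `a = c = 0` (kernel vector `(1, 0)`) or `b = d = 0`
(kernel vector `(0, 1)`); for `Φ_ε` these are the three listed points.
-/

open ContinuousLinearMap Function

namespace CrossCap

variable {𝕜 : Type*} [NontriviallyNormedField 𝕜]

def deformedA1 (ε : 𝕜) (z : 𝕜 × 𝕜) : 𝕜 × 𝕜 × 𝕜 :=
  ((z.1 - ε) * z.1, (z.2 - ε) * z.2, z.1 * z.2)

def diagWithRow (a b c d : 𝕜) : 𝕜 × 𝕜 →L[𝕜] 𝕜 × 𝕜 × 𝕜 :=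
  (a • fst 𝕜 𝕜 𝕜).prod ((b • snd 𝕜 𝕜 𝕜).prod (c • fst 𝕜 𝕜 𝕜 + d • snd 𝕜 𝕜 𝕜))

@[simp]
theorem diagWithRow_apply (a b c d : 𝕜) (v : 𝕜 × 𝕜) :
    diagWithRow a b c d v = (a * v.1, b * v.2, c * v.1 + d * v.2) := by
  simp [diagWithRow]

theorem hasFDerivAt_deformedA1 (ε : 𝕜) (z : 𝕜 × 𝕜) :
    HasFDerivAt (deformedA1 ε) (diagWithRow (2 * z.1 - ε) (2 * z.2 - ε) z.2 z.1) z := by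
  have h1 := ((hasFDerivAt_fst (p := z) (𝕜 := 𝕜)).sub_const ε).mul hasFDerivAt_fst
  have h2 := ((hasFDerivAt_snd (p := z) (𝕜 := 𝕜)).sub_const ε).mul hasFDerivAt_snd
  have h3 := (hasFDerivAt_fst (p := z) (𝕜 := 𝕜)).mul hasFDerivAt_snd
  refine (h1.prodMk (h2.prodMk h3)).congr_fderiv (ContinuousLinearMap.ext fun v => ?_)
  simp only [ContinuousLinearMap.prod_apply, add_apply, smul_apply, coe_fst', coe_snd', smul_eq_mul,
    diagWithRow_apply, Prod.ext_iff]
  refine ⟨?_, ?_, ?_⟩ <;> ring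

theorem not_injective_diagWithRow_iff {a b c d : 𝕜} :
    ¬ Injective (diagWithRow a b c d) ↔
      (a = 0 ∧ b = 0) ∨ (a = 0 ∧ c = 0) ∨ (b = 0 ∧ d = 0) := by
  rw [injective_iff_map_eq_zero]
  push Not
  simp only [diagWithRow_apply, Prod.ext_iff, Prod.fst_zero, Prod.snd_zero, Prod.exists,
    mul_eq_zero, ne_eq, not_and_or]
  constructor
  · rintro ⟨h, k, ⟨ha, hb, hrow⟩, hne⟩
    rcases hne with hh | hk
    · have ha : a = 0 := ha.resolve_right hh
      rcases hb with hb | hk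
      · exact .inl ⟨ha, hb⟩
      · simp only [hk, mul_zero, add_zero, mul_eq_zero, hh, or_false] at hrow
        exact .inr (.inl ⟨ha, hrow⟩)
    · have hb : b = 0 := hb.resolve_right hk
      rcases ha with ha | hh
      · exact .inl ⟨ha, hb⟩
      · simp only [hh, mul_zero, zero_add, mul_eq_zero, hk, or_false] at hrow
        exact .inr (.inr ⟨hb, hrow⟩)
  · rintro (⟨rfl, rfl⟩ | ⟨rfl, rfl⟩ | ⟨rfl, rfl⟩)
    · by_cases hc : c = 0
      · exact ⟨1, 0, by simp [hc]⟩
      · exact ⟨d, -c, by simp [hc]; ring⟩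
    · exact ⟨1, 0, by simp⟩
    · exact ⟨0, 1, by simp⟩

end CrossCap

open CrossCap in
theorem stmt_16_general (ε : ℂ) (Φ : ℂ × ℂ → ℂ × ℂ × ℂ)
    (hΦ : ∀ s t : ℂ, Φ (s, t) = ((s - ε) * s, (t - ε) * t, s * t)) :
    {z : ℂ × ℂ | ¬ Function.Injective (fderiv ℂ Φ z)} =
      {((0 : ℂ), ε / 2), (ε / 2, (0 : ℂ)), (ε / 2, ε / 2)} := by
  obtain rfl : Φ = deformedA1 ε := funext fun z => hΦ z.1 z.2
  have hcrit (s : ℂ) : 2 * s - ε = 0 ↔ s = ε / 2 := by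
    rw [sub_eq_zero, eq_div_iff two_ne_zero, mul_comm, eq_comm]
  ext ⟨s, t⟩
  simp only [Set.mem_ofPred_eq, (hasFDerivAt_deformedA1 ε (s, t)).fderiv,
    not_injective_diagWithRow_iff, hcrit, Set.mem_insert_iff, Set.mem_singleton_iff,
    Prod.mk.injEq]
  tauto

/-- The deformation `Φ_ε(s,t) = ((s−ε)s, (t−ε)t, st)` of the `A₁`-germ has exactly
three singular points (cross caps): `(0, ε/2)`, `(ε/2, 0)` and `(ε/2, ε/2)`. -/
theorem stmt_16 (ε : ℂ) (hε : ε ≠ 0) (Φ : ℂ × ℂ → ℂ × ℂ × ℂ)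
    (hΦ : ∀ s t : ℂ, Φ (s, t) = ((s - ε) * s, (t - ε) * t, s * t)) :
    {z : ℂ × ℂ | ¬ Function.Injective (fderiv ℂ Φ z)} =
      {((0 : ℂ), ε / 2), (ε / 2, (0 : ℂ)), (ε / 2, ε / 2)} :=
  stmt_16_general ε Φ hΦ
end

section
/- Fix ε ∈ ℂ with ε ≠ 0 and define Φ_ε : ℂ² → ℂ³ by Φ_ε(s,t) = ((s − ε)s, (t − ε)t, st). For all (s,t), (s',t') ∈ ℂ² with (s,t) ≠ (s',t'), one has Φ_ε(s,t) = Φ_ε(s',t') if and only if one of the following three conditions holds: (1) s' = s, t' = ε − t and s = 0; (2) s' = ε − s, t' = t and t = 0; (3) s' = ε − s, t' = ε − t and s + t = ε. -/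
/-- Double points of the deformation `Φ_ε(s,t) = ((s−ε)s, (t−ε)t, st)` of the
`A₁`-germ: for `(s,t) ≠ (s',t')`, `Φ_ε(s,t) = Φ_ε(s',t')` iff one of
(1) `s' = s`, `t' = ε − t`, `s = 0`; (2) `s' = ε − s`, `t' = t`, `t = 0`;
(3) `s' = ε − s`, `t' = ε − t`, `s + t = ε` holds. -/
theorem stmt_17 (ε : ℂ) (hε : ε ≠ 0) (Φ : ℂ × ℂ → ℂ × ℂ × ℂ)
    (hΦ : ∀ s t : ℂ, Φ (s, t) = ((s - ε) * s, (t - ε) * t, s * t)) :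
    ∀ s t s' t' : ℂ, (s, t) ≠ (s', t') →
      (Φ (s, t) = Φ (s', t') ↔
        (s' = s ∧ t' = ε - t ∧ s = 0) ∨
        (s' = ε - s ∧ t' = t ∧ t = 0) ∨
        (s' = ε - s ∧ t' = ε - t ∧ s + t = ε)) := by
  intro s t s' t' hne
  rw [hΦ, hΦ, Prod.mk.injEq, Prod.mk.injEq]
  constructor
  · rintro ⟨h1, h2, h3⟩
    have hs : (s' - s) * (s' + s - ε) = 0 := by linear_combination -h1
    have ht : (t' - t) * (t' + t - ε) = 0 := by linear_combination -h2
    rcases mul_eq_zero.1 hs with hs | hs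
    · have hs' : s' = s := by linear_combination hs
      rcases mul_eq_zero.1 ht with ht | ht
      · have ht' : t' = t := by linear_combination ht
        exact absurd (by rw [hs', ht']) hne
      · have ht' : t' = ε - t := by linear_combination ht
        rw [hs', ht'] at h3
        have h4 : s * (2 * t - ε) = 0 := by linear_combination h3
        rcases mul_eq_zero.1 h4 with h4 | h4
        · exact Or.inl ⟨hs', ht', h4⟩
        · refine absurd ?_ hne
          rw [hs', ht', Prod.mk.injEq]
          exact ⟨rfl, by linear_combination h4⟩
    · have hs' : s' = ε - s := by linear_combination hs
      rcases mul_eq_zero.1 ht with ht | ht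
      · have ht' : t' = t := by linear_combination ht
        rw [hs', ht'] at h3
        have h4 : t * (2 * s - ε) = 0 := by linear_combination h3
        rcases mul_eq_zero.1 h4 with h4 | h4
        · exact Or.inr (Or.inl ⟨hs', ht', h4⟩)
        · refine absurd ?_ hne
          rw [hs', ht', Prod.mk.injEq]
          exact ⟨by linear_combination h4, rfl⟩
      · have ht' : t' = ε - t := by linear_combination ht
        rw [hs', ht'] at h3
        have h4 : ε * (ε - s - t) = 0 := by linear_combination -h3
        rcases mul_eq_zero.1 h4 with h4 | h4
        · exact absurd h4 hε
        · exact Or.inr (Or.inr ⟨hs', ht', by linear_combination -h4⟩)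
  · rintro (⟨rfl, rfl, rfl⟩ | ⟨rfl, rfl, rfl⟩ | ⟨rfl, rfl, h⟩)
    · exact ⟨by ring, by ring, by ring⟩
    · exact ⟨by ring, by ring, by ring⟩
    · exact ⟨by ring, by ring, by linear_combination ε * h⟩
end

section
/- Fix ε ∈ ℂ with ε ≠ 0 and define Φ_ε : ℂ² → ℂ³ by Φ_ε(s,t) = ((s − ε)s, (t − ε)t, st). Then a point y ∈ ℂ³ has at least three pairwise distinct preimages under Φ_ε if and only if y = (0,0,0), and the preimages of (0,0,0) are exactly the three points (0,0), (ε,0) and (0,ε). -/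
/-- The deformation `Φ_ε(s,t) = ((s−ε)s, (t−ε)t, st)` of the `A₁`-germ has exactly
one triple value, namely the origin, whose preimages are `(0,0)`, `(ε,0)`, `(0,ε)`. -/
theorem stmt_18 (ε : ℂ) (hε : ε ≠ 0) (Φ : ℂ × ℂ → ℂ × ℂ × ℂ)
    (hΦ : ∀ s t : ℂ, Φ (s, t) = ((s - ε) * s, (t - ε) * t, s * t)) :
    (∀ y : ℂ × ℂ × ℂ,
      (∃ p₁ p₂ p₃ : ℂ × ℂ, p₁ ≠ p₂ ∧ p₁ ≠ p₃ ∧ p₂ ≠ p₃ ∧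
        Φ p₁ = y ∧ Φ p₂ = y ∧ Φ p₃ = y) ↔ y = ((0 : ℂ), (0 : ℂ), (0 : ℂ))) ∧
    {p : ℂ × ℂ | Φ p = ((0 : ℂ), (0 : ℂ), (0 : ℂ))} =
      {((0 : ℂ), (0 : ℂ)), (ε, (0 : ℂ)), ((0 : ℂ), ε)} := by
  -- a quadratic has at most two roots
  have quad : ∀ a s₁ s₂ : ℂ, s₁ ≠ s₂ → (s₁ - ε) * s₁ = a → (s₂ - ε) * s₂ = a →
      s₁ + s₂ = ε := by
    intro a s₁ s₂ hne h1 h2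
    have h : (s₁ - s₂) * (s₁ + s₂ - ε) = 0 := by ring_nf; linear_combination h1 - h2
    rcases mul_eq_zero.1 h with h | h
    · exact absurd (sub_eq_zero.1 h) hne
    · linear_combination h
  have quad3 : ∀ a s₁ s₂ s₃ : ℂ, s₁ ≠ s₂ → s₁ ≠ s₃ → s₂ ≠ s₃ →
      (s₁ - ε) * s₁ = a → (s₂ - ε) * s₂ = a → (s₃ - ε) * s₃ = a → False := by
    intro a s₁ s₂ s₃ h12 h13 h23 e1 e2 e3
    have q1 := quad a s₁ s₂ h12 e1 e2
    have q2 := quad a s₁ s₃ h13 e1 e3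
    exact h23 (by linear_combination q1 - q2)
  constructor
  · rintro ⟨a, b, c⟩
    constructor
    · rintro ⟨⟨s₁, t₁⟩, ⟨s₂, t₂⟩, ⟨s₃, t₃⟩, h12, h13, h23, e1, e2, e3⟩
      rw [hΦ, Prod.ext_iff, Prod.ext_iff] at e1 e2 e3
      obtain ⟨a1, b1, c1⟩ := e1
      obtain ⟨a2, b2, c2⟩ := e2
      obtain ⟨a3, b3, c3⟩ := e3
      dsimp only at a1 b1 c1 a2 b2 c2 a3 b3 c3
      have h12 : s₁ = s₂ → t₁ = t₂ → False := fun hs ht => h12 (by rw [hs, ht])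
      have h13 : s₁ = s₃ → t₁ = t₃ → False := fun hs ht => h13 (by rw [hs, ht])
      have h23 : s₂ = s₃ → t₂ = t₃ → False := fun hs ht => h23 (by rw [hs, ht])
      by_cases hc : c = 0
      · -- show a = 0 and b = 0
        have ha : a = 0 := by
          by_cases hs : s₁ = 0 ∨ s₂ = 0 ∨ s₃ = 0
          · rcases hs with h | h | h
            · rw [← a1, h]; ring
            · rw [← a2, h]; ring
            · rw [← a3, h]; ring
          · push_neg at hs
            obtain ⟨hs1, hs2, hs3⟩ := hs
            have ht1 : t₁ = 0 := by
              have := c1; rw [hc] at this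
              rcases mul_eq_zero.1 this with h | h
              · exact absurd h hs1
              · exact h
            have ht2 : t₂ = 0 := by
              have := c2; rw [hc] at this
              rcases mul_eq_zero.1 this with h | h
              · exact absurd h hs2
              · exact h
            have ht3 : t₃ = 0 := by
              have := c3; rw [hc] at this
              rcases mul_eq_zero.1 this with h | h
              · exact absurd h hs3
              · exact h
            exact absurd (quad3 a s₁ s₂ s₃
              (fun h => h12 h (ht1.trans ht2.symm))
              (fun h => h13 h (ht1.trans ht3.symm))
              (fun h => h23 h (ht2.trans ht3.symm)) a1 a2 a3) (fun h => h)
        have hb : b = 0 := by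
          by_cases ht : t₁ = 0 ∨ t₂ = 0 ∨ t₃ = 0
          · rcases ht with h | h | h
            · rw [← b1, h]; ring
            · rw [← b2, h]; ring
            · rw [← b3, h]; ring
          · push_neg at ht
            obtain ⟨ht1, ht2, ht3⟩ := ht
            have hs1 : s₁ = 0 := by
              have := c1; rw [hc] at this
              rcases mul_eq_zero.1 this with h | h
              · exact h
              · exact absurd h ht1
            have hs2 : s₂ = 0 := by
              have := c2; rw [hc] at this
              rcases mul_eq_zero.1 this with h | h
              · exact h
              · exact absurd h ht2
            have hs3 : s₃ = 0 := by
              have := c3; rw [hc] at this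
              rcases mul_eq_zero.1 this with h | h
              · exact h
              · exact absurd h ht3
            exact absurd (quad3 b t₁ t₂ t₃
              (fun h => h12 (hs1.trans hs2.symm) h)
              (fun h => h13 (hs1.trans hs3.symm) h)
              (fun h => h23 (hs2.trans hs3.symm) h) b1 b2 b3) (fun h => h)
        simp [ha, hb, hc]
      · -- c ≠ 0 : impossible, at most two preimages
        exfalso
        have hs1 : s₁ ≠ 0 := fun h => hc (by rw [← c1, h, zero_mul])
        have hs2 : s₂ ≠ 0 := fun h => hc (by rw [← c2, h, zero_mul])
        have hs3 : s₃ ≠ 0 := fun h => hc (by rw [← c3, h, zero_mul])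
        have key : ∀ s t s' t' : ℂ, s ≠ 0 → s * t = c → s' * t' = c → s = s' → t = t' := by
          intro s t s' t' hs hst hst' hss
          have : s * (t - t') = 0 := by rw [mul_sub, hst, hss, hst', sub_self]
          rcases mul_eq_zero.1 this with h | h
          · exact absurd h hs
          · exact sub_eq_zero.1 h
        exact quad3 a s₁ s₂ s₃
          (fun h => h12 h (key s₁ t₁ s₂ t₂ hs1 c1 c2 h))
          (fun h => h13 h (key s₁ t₁ s₃ t₃ hs1 c1 c3 h))
          (fun h => h23 h (key s₂ t₂ s₃ t₃ hs2 c2 c3 h)) a1 a2 a3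
    · rintro ⟨rfl, rfl, rfl⟩
      refine ⟨(0, 0), (ε, 0), (0, ε), ?_, ?_, ?_, ?_, ?_, ?_⟩ <;>
        simp [hΦ, Prod.ext_iff, hε, Ne.symm hε]
  · ext ⟨s, t⟩
    simp only [Set.mem_setOf_eq, hΦ, Prod.mk.injEq, Set.mem_insert_iff,
      Set.mem_singleton_iff]
    constructor
    · rintro ⟨hs, ht, hst⟩
      have hs' : s = ε ∨ s = 0 := by
        rcases mul_eq_zero.1 hs with h | h
        · exact Or.inl (sub_eq_zero.1 h)
        · exact Or.inr h
      have ht' : t = ε ∨ t = 0 := by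
        rcases mul_eq_zero.1 ht with h | h
        · exact Or.inl (sub_eq_zero.1 h)
        · exact Or.inr h
      rcases hs' with rfl | rfl <;> rcases ht' with h | h <;> subst h
      · exact absurd (mul_self_eq_zero.1 hst) hε
      · exact Or.inr (Or.inl ⟨rfl, rfl⟩)
      · exact Or.inr (Or.inr ⟨rfl, rfl⟩)
      · exact Or.inl ⟨rfl, rfl⟩
    · rintro (⟨rfl, rfl⟩ | ⟨rfl, rfl⟩ | ⟨rfl, rfl⟩) <;> norm_num
end

section
/- There exists ε₀ > 0 such that for every real ε with 0 < ε ≤ ε₀ there are no complex numbers a, b, z with |z| ≤ 1 satisfying simultaneously 4·conj(z) + ε² = a(a − ε), z = b(b − ε), and I·(√(1 − |z|²) : ℂ) = a·b. -/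
/-!
Put `w = ab = i√(1 - |z|²)`, so that `w² = |z|² - 1` and `|w| ≤ 1`. Multiplying the first two
equations gives `(4 z̄ + ε²) z = w (w - ε(a + b) + ε²)`, that is
`3|z|² + 1 = ε (-w(a + b) + εw - εz)`. The left side is at least `1`, while the quadratic
equations for `a` and `b` keep `|a| ≤ 3` and `|b| ≤ 2`, so the right side is `O(ε)`.
-/

open Complex

lemma norm_le_of_norm_mul_sub_le {𝕜 : Type*} [NormedDivisionRing 𝕜] {x c : 𝕜} {t : ℝ}
    (hc : ‖c‖ ≤ t) (h : ‖x * (x - c)‖ ≤ t * (t - ‖c‖)) : ‖x‖ ≤ t := by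
  have hx : ‖x‖ * (‖x‖ - ‖c‖) ≤ ‖x * (x - c)‖ := by
    rw [norm_mul]
    exact mul_le_mul_of_nonneg_left (norm_sub_norm_le x c) (norm_nonneg x)
  by_contra! ht
  nlinarith [norm_nonneg c]

lemma four_mul_mul_sub_sq_eq {R : Type*} [CommRing R] {a b z z' w ε : R}
    (h₁ : 4 * z' + ε ^ 2 = a * (a - ε)) (h₂ : z = b * (b - ε)) (h₃ : w = a * b) :
    4 * (z' * z) - w ^ 2 = ε * (-w * (a + b) + ε * w - ε * z) := by
  linear_combination z * h₁ + a * (a - ε) * h₂ - (w + a * b - ε * (a + b - ε)) * h₃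

lemma norm_mul_neg_mul_add_add_mul_sub_mul_le {𝕜 : Type*} [NormedField 𝕜]
    (a b z w ε : 𝕜) :
    ‖ε * (-w * (a + b) + ε * w - ε * z)‖ ≤
      ‖ε‖ * (‖w‖ * (‖a‖ + ‖b‖) + ‖ε‖ * ‖w‖ + ‖ε‖ * ‖z‖) := by
  rw [norm_mul]
  gcongr
  refine (norm_sub_le _ _).trans ?_
  rw [norm_mul ε z]
  gcongr
  refine (norm_add_le _ _).trans ?_
  rw [norm_mul, norm_neg, norm_mul]
  gcongr
  exact norm_add_le a b

lemma norm_I_mul_sqrt_one_sub_sq_le (r : ℝ) : ‖I * ((√(1 - r ^ 2) : ℝ) : ℂ)‖ ≤ 1 := by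
  rw [norm_mul, norm_I, one_mul, norm_real, Real.norm_of_nonneg (Real.sqrt_nonneg _)]
  exact Real.sqrt_le_one.mpr (by nlinarith)

lemma I_mul_sqrt_one_sub_sq_sq {r : ℝ} (hr : r ^ 2 ≤ 1) :
    (I * ((√(1 - r ^ 2) : ℝ) : ℂ)) ^ 2 = r ^ 2 - 1 := by
  rw [mul_pow, I_sq, ← ofReal_pow, Real.sq_sqrt (by linarith)]
  push_cast
  ring

/-- For all sufficiently small `ε > 0`, the membrane
`H = {(4·conj z + ε², z, i√(1 − |z|²)) : |z| ≤ 1}` is disjoint from the image of the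
deformation `Φ_ε(s,t) = ((s−ε)s, (t−ε)t, st)` of the `A₁`-germ: there are no
`a, b, z ∈ ℂ` with `|z| ≤ 1`, `4·conj z + ε² = a(a−ε)`, `z = b(b−ε)` and
`i√(1 − |z|²) = ab`. -/
theorem stmt_19 :
    ∃ ε₀ : ℝ, 0 < ε₀ ∧
      ∀ ε : ℝ, 0 < ε → ε ≤ ε₀ →
        ¬ ∃ a b z : ℂ, ‖z‖ ≤ 1 ∧
          4 * (starRingEnd ℂ) z + (ε : ℂ) ^ 2 = a * (a - (ε : ℂ)) ∧
          z = b * (b - (ε : ℂ)) ∧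
          Complex.I * ((Real.sqrt (1 - ‖z‖ ^ 2) : ℝ) : ℂ) = a * b := by
  refine ⟨1 / 10, by norm_num, ?_⟩
  rintro ε hε hε₀ ⟨a, b, z, hz, h₁, h₂, h₃⟩
  set w := I * ((√(1 - ‖z‖ ^ 2) : ℝ) : ℂ)
  have hw : ‖w‖ ≤ 1 := norm_I_mul_sqrt_one_sub_sq_le _
  have hε_norm : ‖(ε : ℂ)‖ = ε := by simp [abs_of_pos hε]
  have ha : ‖a‖ ≤ 3 := by
    refine norm_le_of_norm_mul_sub_le (by linarith) ?_
    calc ‖a * (a - ε)‖ ≤ ‖4 * (starRingEnd ℂ) z‖ + ‖(ε : ℂ) ^ 2‖ :=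
          h₁ ▸ norm_add_le _ _
      _ ≤ 4 * 1 + ε ^ 2 := by rw [norm_mul, norm_conj, norm_pow, hε_norm]; norm_num [hz]
      _ ≤ 3 * (3 - ‖(ε : ℂ)‖) := by nlinarith
  have hb : ‖b‖ ≤ 2 :=
    norm_le_of_norm_mul_sub_le (c := (ε : ℂ)) (by linarith)
      (by rw [← h₂, hε_norm]; nlinarith)
  have key := four_mul_mul_sub_sq_eq h₁ h₂ h₃
  rw [conj_mul', I_mul_sqrt_one_sub_sq_sq (by nlinarith [norm_nonneg z])] at key
  have hε_large : 1 ≤ ε * (5 + 2 * ε) :=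
    calc 1 ≤ 3 * ‖z‖ ^ 2 + 1 := by nlinarith
      _ = ‖((3 * ‖z‖ ^ 2 + 1 : ℝ) : ℂ)‖ := by
        rw [norm_real, Real.norm_of_nonneg (by positivity)]
      _ = ‖4 * (‖z‖ : ℂ) ^ 2 - (‖z‖ ^ 2 - 1)‖ := by push_cast; ring_nf
      _ ≤ ε * (‖w‖ * (‖a‖ + ‖b‖) + ε * ‖w‖ + ε * ‖z‖) := by
        simpa only [key, hε_norm] using norm_mul_neg_mul_add_add_mul_sub_mul_le a b z w (ε : ℂ)
      _ ≤ ε * (1 * (3 + 2) + ε * 1 + ε * 1) := by gcongr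
      _ = ε * (5 + 2 * ε) := by ring
  nlinarith
end
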